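/- Let G be a finite simple graph of order n with no full vertices (no vertex adjacent to all other vertices). Then GC(G) = n if and only if PRC(G) = n. -/

import Mathlib

open SimpleGraph Finset

variable {V : Type*} [Fintype V] [DecidableEq V]

/-- `S` is a dominating set of the graph `G`. -/
def IsDomSet (G : SimpleGraph V) (S : Finset V) : Prop :=
  ∀ v : V, v ∈ S ∨ ∃ u ∈ S, G.Adj u v

/-- `S` is a global dominating set of `G`: it dominates both `G` and its complement. -/
def IsGlobalDomSet (G : SimpleGraph V) (S : Finset V) : Prop :=
  IsDomSet G S ∧ IsDomSet Gᶜ S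

/-- Disjoint sets `A` and `B` form a global coalition in `G`. -/
def IsGlobalCoalition (G : SimpleGraph V) (A B : Finset V) : Prop :=
  Disjoint A B ∧ ¬ IsGlobalDomSet G A ∧ ¬ IsGlobalDomSet G B ∧ IsGlobalDomSet G (A ∪ B)

/-- `π` is a global coalition partition (gc-partition) of `G`. -/
def IsGCPartition (G : SimpleGraph V) (π : Finpartition (Finset.univ : Finset V)) : Prop :=
  ∀ A ∈ π.parts, ¬ IsGlobalDomSet G A ∧ ∃ B ∈ π.parts, B ≠ A ∧ IsGlobalCoalition G A B

/-- The global coalition number `GC(G)`: the maximum number of parts in a gc-partition of `G`. -/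
noncomputable def globalCoalitionNumber (G : SimpleGraph V) : ℕ :=
  sSup {n | ∃ π : Finpartition (Finset.univ : Finset V), IsGCPartition G π ∧ π.parts.card = n}

/-- `S` is a perfect dominating set of `G`: every vertex not in `S` has exactly one neighbor
in `S`. -/
def IsPerfectDomSet (G : SimpleGraph V) (S : Finset V) : Prop :=
  ∀ v ∉ S, ∃! u, u ∈ S ∧ G.Adj u v

/-- Disjoint sets `A` and `B` form a perfect coalition in `G`. -/
def IsPerfectCoalition (G : SimpleGraph V) (A B : Finset V) : Prop :=
  Disjoint A B ∧ ¬ IsDomSet G A ∧ ¬ IsDomSet G B ∧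
  (∀ v ∉ A, ∀ u₁ ∈ A, ∀ u₂ ∈ A, G.Adj u₁ v → G.Adj u₂ v → u₁ = u₂) ∧
  (∀ v ∉ B, ∀ u₁ ∈ B, ∀ u₂ ∈ B, G.Adj u₁ v → G.Adj u₂ v → u₁ = u₂) ∧
  IsPerfectDomSet G (A ∪ B)

/-- `π` is a perfect coalition partition (prc-partition) of `G`. -/
def IsPrcPartition (G : SimpleGraph V) (π : Finpartition (Finset.univ : Finset V)) : Prop :=
  ∀ A ∈ π.parts, (∃ v : V, A = {v} ∧ IsDomSet G A) ∨
    ∃ B ∈ π.parts, B ≠ A ∧ IsPerfectCoalition G A B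

/-- The perfect coalition number `PRC(G)`. -/
noncomputable def perfectCoalitionNumber (G : SimpleGraph V) : ℕ :=
  sSup {n | ∃ π : Finpartition (Finset.univ : Finset V), IsPrcPartition G π ∧ π.parts.card = n}

/-!
A partition of the `n` vertices into `n` parts consists of singletons, and without full vertices
no singleton dominates `G`. For two distinct vertices `v`, `u`, both "`{v, u}` dominates `G` and
`Gᶜ`" and "`{v, u}` is a perfect dominating set" say that every other vertex is adjacent to
exactly one of `v`, `u`; the at-most-one-neighbour conditions hold trivially for singletons.
Hence the gc-partitions and the prc-partitions with `n` parts are the same partitions.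
-/

namespace Finpartition

variable {α : Type*} [DecidableEq α] {s : Finset α}

lemma exists_eq_singleton_of_card_parts_eq (P : Finpartition s) (h : #P.parts = #s)
    {t : Finset α} (ht : t ∈ P.parts) : ∃ a, t = {a} := by
  have hle : ∀ t ∈ P.parts, 1 ≤ #t := fun t ht => card_pos.2 (P.nonempty_of_mem_parts ht)
  have hsum : ∑ t ∈ P.parts, 1 = ∑ t ∈ P.parts, #t := by
    rw [P.sum_card_parts, sum_const, smul_eq_mul, mul_one, h]
  exact card_eq_one.1 ((sum_eq_sum_iff_of_le hle).1 hsum t ht).symm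

end Finpartition

lemma Nat.sSup_eq_iff_mem_of_forall_le {S : Set ℕ} {n : ℕ} (hn : 0 < n) (hS : ∀ m ∈ S, m ≤ n) :
    sSup S = n ↔ n ∈ S := by
  refine ⟨fun h => ?_, fun h => IsGreatest.csSup_eq ⟨h, hS⟩⟩
  have hne : S.Nonempty := Set.nonempty_iff_ne_empty.2 fun he => by simp [he, ← h] at hn
  exact h ▸ Nat.sSup_mem hne ⟨n, hS⟩

section

omit [Fintype V] [DecidableEq V]

variable {G : SimpleGraph V} {v : V} {S : Finset V}

lemma not_isDomSet_singleton (h : ∃ u, u ≠ v ∧ ¬ G.Adj v u) : ¬ IsDomSet G {v} := by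
  obtain ⟨u, hne, hnadj⟩ := h
  simpa [IsDomSet, hne] using ⟨u, hne, hnadj⟩

lemma isDomSet_iff : IsDomSet G S ↔ ∀ w ∉ S, ∃ x ∈ S, G.Adj x w :=
  forall_congr' fun _ => or_iff_not_imp_left

lemma isGlobalDomSet_iff :
    IsGlobalDomSet G S ↔ ∀ w ∉ S, (∃ x ∈ S, G.Adj x w) ∧ ∃ x ∈ S, ¬ G.Adj x w := by
  simp only [IsGlobalDomSet, isDomSet_iff, ← forall₂_and]
  refine forall₂_congr fun w hw =>
    and_congr_right' (exists_congr fun x => and_congr_right fun hx => ?_)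
  rw [compl_adj, and_iff_right (ne_of_mem_of_not_mem hx hw)]

end

section

omit [Fintype V]

variable {G : SimpleGraph V} {v u : V}

lemma isGlobalDomSet_pair_iff :
    IsGlobalDomSet G {v, u} ↔ ∀ w ∉ ({v, u} : Finset V), Xor (G.Adj v w) (G.Adj u w) := by
  rw [isGlobalDomSet_iff]
  refine forall₂_congr fun w _ => ?_
  simp only [mem_insert, mem_singleton, exists_eq_or_imp, exists_eq_left, Xor]
  tauto

lemma isPerfectDomSet_pair_iff (hvu : v ≠ u) :
    IsPerfectDomSet G {v, u} ↔ ∀ w ∉ ({v, u} : Finset V), Xor (G.Adj v w) (G.Adj u w) := by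
  refine forall₂_congr fun w _ => ?_
  simp only [mem_insert, mem_singleton]
  constructor
  · rintro ⟨x, ⟨rfl | rfl, hx⟩, huniq⟩
    · exact Or.inl ⟨hx, fun hu => hvu (huniq u ⟨Or.inr rfl, hu⟩).symm⟩
    · exact Or.inr ⟨hx, fun hv => hvu (huniq v ⟨Or.inl rfl, hv⟩)⟩
  · rintro (⟨hv, hu⟩ | ⟨hu, hv⟩)
    · exact ⟨v, ⟨Or.inl rfl, hv⟩, by rintro x ⟨rfl | rfl, hx⟩ <;> tauto⟩
    · exact ⟨u, ⟨Or.inr rfl, hu⟩, by rintro x ⟨rfl | rfl, hx⟩ <;> tauto⟩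

lemma isGlobalCoalition_singleton_iff (hv : ¬ IsDomSet G {v}) (hu : ¬ IsDomSet G {u}) :
    IsGlobalCoalition G {v} {u} ↔ IsPerfectCoalition G {v} {u} := by
  have hsub : ∀ a : V, ∀ w ∉ ({a} : Finset V), ∀ u₁ ∈ ({a} : Finset V), ∀ u₂ ∈ ({a} : Finset V),
      G.Adj u₁ w → G.Adj u₂ w → u₁ = u₂ := fun _ _ _ _ h₁ _ h₂ _ _ =>
    (mem_singleton.1 h₁).trans (mem_singleton.1 h₂).symm
  unfold IsGlobalCoalition IsPerfectCoalition
  rw [← insert_eq]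
  constructor
  · rintro ⟨hvu, -, -, hdom⟩
    rw [isGlobalDomSet_pair_iff, ← isPerfectDomSet_pair_iff (disjoint_singleton.1 hvu)] at hdom
    exact ⟨hvu, hv, hu, hsub v, hsub u, hdom⟩
  · rintro ⟨hvu, -, -, -, -, hdom⟩
    rw [isPerfectDomSet_pair_iff (disjoint_singleton.1 hvu), ← isGlobalDomSet_pair_iff] at hdom
    exact ⟨hvu, mt And.left hv, mt And.left hu, hdom⟩

end

lemma isGCPartition_iff_isPrcPartition {G : SimpleGraph V} (hdom : ∀ v, ¬ IsDomSet G {v})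
    {π : Finpartition (univ : Finset V)} (hπ : ∀ A ∈ π.parts, ∃ v, A = {v}) :
    IsGCPartition G π ↔ IsPrcPartition G π := by
  refine forall₂_congr fun A hA => ?_
  obtain ⟨v, rfl⟩ := hπ A hA
  simp only [hdom v, and_false, exists_false, false_or]
  rw [and_iff_right (show ¬ IsGlobalDomSet G {v} from mt And.left (hdom v))]
  refine exists_congr fun B => and_congr_right fun hB => and_congr_right fun _ => ?_
  obtain ⟨u, rfl⟩ := hπ B hB
  exact isGlobalCoalition_singleton_iff (hdom v) (hdom u)

section

variable (P : Finpartition (univ : Finset V) → Prop)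

lemma card_mem_upperBounds_card_parts :
    Fintype.card V ∈
      upperBounds {n | ∃ π : Finpartition (univ : Finset V), P π ∧ #π.parts = n} := by
  rintro _ ⟨π, -, rfl⟩
  exact π.card_parts_le_card.trans_eq card_univ

lemma sSup_card_parts_le_card :
    sSup {n | ∃ π : Finpartition (univ : Finset V), P π ∧ #π.parts = n} ≤ Fintype.card V :=
  csSup_le' (card_mem_upperBounds_card_parts P)

lemma sSup_card_parts_eq_card_iff (hV : 0 < Fintype.card V) :
    sSup {n | ∃ π : Finpartition (univ : Finset V), P π ∧ #π.parts = n} = Fintype.card V ↔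
      ∃ π : Finpartition (univ : Finset V), P π ∧ #π.parts = Fintype.card V :=
  Nat.sSup_eq_iff_mem_of_forall_le hV (card_mem_upperBounds_card_parts P)

end

theorem gc_eq_card_iff_prc_eq_card (G : SimpleGraph V)
    (hfull : ∀ v : V, ∃ u : V, u ≠ v ∧ ¬ G.Adj v u) :
    globalCoalitionNumber G = Fintype.card V ↔
      perfectCoalitionNumber G = Fintype.card V := by
  unfold globalCoalitionNumber perfectCoalitionNumber
  rcases (Fintype.card V).eq_zero_or_pos with hV | hV
  · have hgc := sSup_card_parts_le_card (IsGCPartition G)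
    have hprc := sSup_card_parts_le_card (IsPrcPartition G)
    omega
  rw [sSup_card_parts_eq_card_iff _ hV, sSup_card_parts_eq_card_iff _ hV]
  refine exists_congr fun π => and_congr_left fun hπ => ?_
  exact isGCPartition_iff_isPrcPartition (fun v => not_isDomSet_singleton (hfull v))
    fun A hA => π.exists_eq_singleton_of_card_parts_eq (hπ.trans card_univ.symm) hA
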